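/- arXiv:1708.09630 — 3 statements merged into one kernel-verified Lean document; each statement's English description precedes it below -/
import Mathlib

section
/- Let L ∈ ℝ^{N×N} be a matrix with nonpositive off-diagonal entries whose row sums are zero (a graph Laplacian), and let Σ = diag(b₁,…,b_N) with bᵢ ≥ 0 and at least one bᵢ > 0. If the associated directed graph (with the leader pinned to the nodes with bᵢ > 0) contains a spanning tree rooted at the leader, then L + Σ is nonsingular and all its eigenvalues have positive real part (it is a nonsingular M-matrix). -/
/-!
For `Re μ ≤ 0` the matrix `μ - (L + diag b)` is weakly chained diagonally dominant: in row `i`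
the off-diagonal moduli sum to `L i i`, the diagonal has modulus at least `L i i + b i`, so
pinned rows are strictly dominant, and the spanning tree gives every row a chain of nonzero
entries to a pinned row. Such a matrix is nonsingular: for `A x = 0`, a coordinate of maximal
modulus forces maximal modulus on every coordinate it is linked to through a weakly dominant
row, and this propagates along the chain to a strictly dominant row, where it is impossible.
-/

open Matrix Finset

namespace Matrix

variable {K ι : Type*} [NormedField K] [Fintype ι] [DecidableEq ι] {A : Matrix ι ι K}
  {x : ι → K}

structure IsWeaklyChainedDiagDominant (A : Matrix ι ι K) : Prop where
  sum_row_le_diag : ∀ i, ∑ j ∈ univ.erase i, ‖A i j‖ ≤ ‖A i i‖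
  exists_chain_to_strict : ∀ i, ∃ r, ∑ j ∈ univ.erase r, ‖A r j‖ < ‖A r r‖ ∧
    Relation.ReflTransGen (fun p q => A p q ≠ 0) i r

theorem norm_diag_mul_le_of_mulVec_eq_zero (hx : A *ᵥ x = 0) (i : ι) :
    ‖A i i‖ * ‖x i‖ ≤ ∑ j ∈ univ.erase i, ‖A i j‖ * ‖x j‖ := by
  have hrow : A i i * x i = -∑ j ∈ univ.erase i, A i j * x j := by
    rw [eq_neg_iff_add_eq_zero, add_sum_erase _ (fun j => A i j * x j) (mem_univ i)]
    exact congrFun hx i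
  calc ‖A i i‖ * ‖x i‖ = ‖∑ j ∈ univ.erase i, A i j * x j‖ := by
        rw [← norm_mul, hrow, norm_neg]
    _ ≤ ∑ j ∈ univ.erase i, ‖A i j‖ * ‖x j‖ := by
      simpa only [norm_mul] using norm_sum_le (univ.erase i) fun j => A i j * x j

theorem sum_row_not_lt_diag_of_mulVec_eq_zero (hx : A *ᵥ x = 0) {i : ι}
    (hmax : ∀ j, ‖x j‖ ≤ ‖x i‖) (hxi : x i ≠ 0) :
    ¬ ∑ j ∈ univ.erase i, ‖A i j‖ < ‖A i i‖ := by
  refine not_lt.mpr (le_of_mul_le_mul_right ?_ (norm_pos_iff.mpr hxi))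
  calc ‖A i i‖ * ‖x i‖ ≤ ∑ j ∈ univ.erase i, ‖A i j‖ * ‖x j‖ :=
        norm_diag_mul_le_of_mulVec_eq_zero hx i
    _ ≤ (∑ j ∈ univ.erase i, ‖A i j‖) * ‖x i‖ := by
      rw [sum_mul]
      exact sum_le_sum fun j _ => mul_le_mul_of_nonneg_left (hmax j) (norm_nonneg _)

theorem norm_eq_of_mulVec_eq_zero (hx : A *ᵥ x = 0) {i j : ι}
    (hmax : ∀ k, ‖x k‖ ≤ ‖x i‖) (hdom : ∑ k ∈ univ.erase i, ‖A i k‖ ≤ ‖A i i‖) (hij : A i j ≠ 0) :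
    ‖x j‖ = ‖x i‖ := by
  obtain rfl | hji := eq_or_ne j i
  · rfl
  have hle : ∀ k ∈ univ.erase i, ‖A i k‖ * ‖x k‖ ≤ ‖A i k‖ * ‖x i‖ :=
    fun k _ => mul_le_mul_of_nonneg_left (hmax k) (norm_nonneg _)
  have heq : ∑ k ∈ univ.erase i, ‖A i k‖ * ‖x k‖ =
      ∑ k ∈ univ.erase i, ‖A i k‖ * ‖x i‖ := by
    refine le_antisymm (sum_le_sum hle) ?_
    calc ∑ k ∈ univ.erase i, ‖A i k‖ * ‖x i‖
        = (∑ k ∈ univ.erase i, ‖A i k‖) * ‖x i‖ := (sum_mul _ _ _).symm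
      _ ≤ ‖A i i‖ * ‖x i‖ := mul_le_mul_of_nonneg_right hdom (norm_nonneg _)
      _ ≤ _ := norm_diag_mul_le_of_mulVec_eq_zero hx i
  exact mul_left_cancel₀ (norm_ne_zero_iff.mpr hij)
    ((sum_eq_sum_iff_of_le hle).mp heq j (mem_erase.mpr ⟨hji, mem_univ j⟩))

namespace IsWeaklyChainedDiagDominant

theorem eq_zero_of_mulVec_eq_zero (hA : A.IsWeaklyChainedDiagDominant) (hx : A *ᵥ x = 0) :
    x = 0 := by
  by_contra hx0
  obtain ⟨k, hk⟩ := Function.ne_iff.mp hx0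
  obtain ⟨i, -, hi⟩ := exists_max_image univ (fun j => ‖x j‖) ⟨k, mem_univ k⟩
  have hxi : x i ≠ 0 := norm_pos_iff.mp ((norm_pos_iff.mpr hk).trans_le (hi k (mem_univ k)))
  obtain ⟨r, hr, hpath⟩ := hA.exists_chain_to_strict i
  have hxr : ‖x r‖ = ‖x i‖ := by
    clear hr
    induction hpath with
    | refl => rfl
    | tail _ hpq ih =>
      exact (norm_eq_of_mulVec_eq_zero hx (fun k => ih ▸ hi k (mem_univ k))
        (hA.sum_row_le_diag _) hpq).trans ih
  refine sum_row_not_lt_diag_of_mulVec_eq_zero hx (fun k => hxr ▸ hi k (mem_univ k)) ?_ hr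
  exact norm_ne_zero_iff.mp (hxr ▸ norm_ne_zero_iff.mpr hxi)

theorem isUnit (hA : A.IsWeaklyChainedDiagDominant) : IsUnit A := by
  refine (isUnit_iff_isUnit_det A).mpr (isUnit_iff_ne_zero.mpr fun hdet => ?_)
  obtain ⟨x, hx0, hx⟩ := exists_mulVec_eq_zero_iff.mpr hdet
  exact hx0 (hA.eq_zero_of_mulVec_eq_zero hx)

end IsWeaklyChainedDiagDominant

theorem isUnit_of_isUnit_map {n R S : Type*} [Fintype n] [DecidableEq n] [CommRing R]
    [CommRing S] (f : R →+* S) [IsLocalHom f] {M : Matrix n n R} (h : IsUnit (M.map f)) :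
    IsUnit M := by
  rw [isUnit_iff_isUnit_det] at h ⊢
  rwa [← RingHom.mapMatrix_apply, ← RingHom.map_det, isUnit_map_iff] at h

end Matrix

section PinnedLaplacian

variable {ι : Type*} [Fintype ι] [DecidableEq ι] {L : Matrix ι ι ℝ} {b : ι → ℝ}

theorem diag_eq_sum_abs_offDiag_of_sum_row_eq_zero (hoffdiag : ∀ i j, i ≠ j → L i j ≤ 0)
    (hrowsum : ∀ i, ∑ j, L i j = 0) (i : ι) : L i i = ∑ j ∈ univ.erase i, |L i j| := by
  have hsplit := add_sum_erase univ (L i) (mem_univ i)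
  rw [hrowsum i] at hsplit
  rw [eq_neg_of_add_eq_zero_left hsplit, ← sum_neg_distrib]
  refine sum_congr rfl fun j hj => (abs_of_nonpos ?_).symm
  exact hoffdiag i j (mem_erase.mp hj).1.symm

theorem isWeaklyChainedDiagDominant_algebraMap_sub_laplacian_add_pinning
    (hoffdiag : ∀ i j, i ≠ j → L i j ≤ 0) (hrowsum : ∀ i, ∑ j, L i j = 0) (hb : ∀ i, 0 ≤ b i)
    (hreach : ∀ i, ∃ r, 0 < b r ∧ Relation.ReflTransGen (fun p q => L q p < 0) r i)
    {μ : ℂ} (hμ : μ.re ≤ 0) :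
    (algebraMap ℂ (Matrix ι ι ℂ) μ -
      (L + diagonal b).map Complex.ofReal).IsWeaklyChainedDiagDominant := by
  set A := algebraMap ℂ (Matrix ι ι ℂ) μ - (L + diagonal b).map Complex.ofReal
  have hoff : ∀ i j, i ≠ j → ‖A i j‖ = |L i j| := by
    intro i j hij
    simp [A, algebraMap_matrix_apply, hij]
  have hsum : ∀ i, ∑ j ∈ univ.erase i, ‖A i j‖ = L i i := fun i => by
    rw [diag_eq_sum_abs_offDiag_of_sum_row_eq_zero hoffdiag hrowsum i]
    exact sum_congr rfl fun j hj => hoff i j (mem_erase.mp hj).1.symm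
  have hdiag : ∀ i, L i i + b i ≤ ‖A i i‖ := fun i => by
    have hre : (A i i).re = μ.re - (L i i + b i) := by simp [A, algebraMap_matrix_apply]
    calc L i i + b i ≤ -(A i i).re := by linarith
      _ ≤ ‖A i i‖ := (neg_le_abs _).trans (Complex.abs_re_le_norm _)
  refine ⟨fun i => by linarith [hsum i, hdiag i, hb i], fun i => ?_⟩
  obtain ⟨r, hbr, hpath⟩ := hreach i
  refine ⟨r, by linarith [hsum r, hdiag r], ?_⟩
  refine Relation.ReflTransGen.mono (fun p q hpq => ?_) _ _
    (Relation.reflTransGen_swap.mpr hpath)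
  have hne : p ≠ q := by
    rintro rfl
    exact hpq.not_ge (hsum p ▸ sum_nonneg fun _ _ => norm_nonneg _)
  rw [← norm_ne_zero_iff, hoff p q hne]
  exact abs_ne_zero.mpr hpq.ne

end PinnedLaplacian

theorem laplacian_plus_pinning_is_nonsingular_M_matrix_general
    {N : ℕ} (L : Matrix (Fin N) (Fin N) ℝ) (b : Fin N → ℝ)
    (hoffdiag : ∀ i j, i ≠ j → L i j ≤ 0)
    (hrowsum : ∀ i, ∑ j, L i j = 0)
    (hb : ∀ i, 0 ≤ b i)
    -- spanning tree rooted at the leader: every node is reachable from some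
    -- pinned node, where there is an edge from `p` to `q` iff `a_{qp} = -L q p > 0`
    (hreach : ∀ i : Fin N, ∃ r : Fin N, 0 < b r ∧
      Relation.ReflTransGen (fun p q : Fin N => L q p < 0) r i) :
    IsUnit (L + Matrix.diagonal b) ∧
      ∀ μ ∈ spectrum ℂ ((L + Matrix.diagonal b).map (Complex.ofReal)), 0 < μ.re := by
  have hshift : ∀ μ : ℂ, μ.re ≤ 0 →
      IsUnit (algebraMap ℂ _ μ - (L + diagonal b).map Complex.ofReal) := fun μ hμ =>
    (isWeaklyChainedDiagDominant_algebraMap_sub_laplacian_add_pinning hoffdiag hrowsum hb hreach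
      hμ).isUnit
  have hunit : IsUnit ((L + diagonal b).map Complex.ofReal) := by
    simpa using (hshift 0 le_rfl).neg
  exact ⟨isUnit_of_isUnit_map Complex.ofRealHom hunit,
    fun μ hμ => not_le.mp fun hre => spectrum.mem_iff.mp hμ (hshift μ hre)⟩

/-- Lemma 1: if `L` is a graph Laplacian (nonpositive off-diagonal entries, zero
row sums) and `Σ = diag(b)` is a nonnegative diagonal pinning matrix with some
`bᵢ > 0`, and every node is reachable from a pinned node (spanning tree rooted
at the leader), then `L + Σ` is a nonsingular M-matrix: it is invertible and
all its (complex) eigenvalues have positive real part. -/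
theorem laplacian_plus_pinning_is_nonsingular_M_matrix
    {N : ℕ} (L : Matrix (Fin N) (Fin N) ℝ) (b : Fin N → ℝ)
    (hoffdiag : ∀ i j, i ≠ j → L i j ≤ 0)
    (hrowsum : ∀ i, ∑ j, L i j = 0)
    (hb : ∀ i, 0 ≤ b i) (hb' : ∃ i, 0 < b i)
    -- spanning tree rooted at the leader: every node is reachable from some
    -- pinned node, where there is an edge from `p` to `q` iff `a_{qp} = -L q p > 0`
    (hreach : ∀ i : Fin N, ∃ r : Fin N, 0 < b r ∧
      Relation.ReflTransGen (fun p q : Fin N => L q p < 0) r i) :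
    IsUnit (L + Matrix.diagonal b) ∧
      ∀ μ ∈ spectrum ℂ ((L + Matrix.diagonal b).map (Complex.ofReal)), 0 < μ.re :=
  laplacian_plus_pinning_is_nonsingular_M_matrix_general L b hoffdiag hrowsum hb hreach
end

section
/- Let P be symmetric positive definite satisfying AᵀP + PA + I − PBBᵀP = 0, let Φ = diag(φᵢ) with φᵢ > 0, let H satisfy S := ΦH + HᵀΦ ≻ 0, and let c ≥ φ_max/λ_min(S). Then the quadratic form η ↦ ηᵀ[Φ ⊗ (PA + AᵀP) − c·S ⊗ (PBBᵀP)]η satisfies ηᵀ[Φ ⊗ (PA + AᵀP) − c·S ⊗ PBBᵀP]η ≤ −ηᵀ(Φ ⊗ I_n)η for all η ∈ ℝ^{Nn}. -/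
/-!
Substituting the Riccati equation turns `PA + AᵀP` into `PBBᵀP - I`, so the claim reduces to
`η (Φ ⊗ PBBᵀP) η ≤ c · η (S ⊗ PBBᵀP) η`. Since `P` is symmetric, `PBBᵀP = QᵀQ` with `Q = BᵀP`,
and `X ⊗ QᵀQ = (I ⊗ Q)ᵀ (X ⊗ I) (I ⊗ Q)`; with `ζ = (I ⊗ Q) η` it suffices to compare
`ζ (Φ ⊗ I) ζ ≤ φ_max ‖ζ‖²` with `λ ‖ζ‖² ≤ ζ (S ⊗ I) ζ`, the latter applying the bound on `S`
to each of the columns `k ↦ ζ (·, k)`.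
-/

open Matrix Kronecker

namespace Matrix

variable {ι κ μ R : Type*}

theorem kronecker_transpose_mul_self [Fintype ι] [Fintype μ] [DecidableEq ι] [DecidableEq μ]
    [CommSemiring R] (X : Matrix ι ι R) (Q : Matrix μ κ R) :
    X ⊗ₖ (Qᵀ * Q) =
      ((1 : Matrix ι ι R) ⊗ₖ Q)ᵀ * (X ⊗ₖ (1 : Matrix μ μ R)) * ((1 : Matrix ι ι R) ⊗ₖ Q) := by
  rw [← kroneckerMap_transpose, transpose_one, ← mul_kronecker_mul, ← mul_kronecker_mul,
    Matrix.one_mul, Matrix.mul_one, Matrix.mul_one]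

theorem dotProduct_kronecker_transpose_mul_self_mulVec [Fintype ι] [Fintype κ] [Fintype μ]
    [DecidableEq ι] [DecidableEq μ] [CommSemiring R]
    (X : Matrix ι ι R) (Q : Matrix μ κ R) (η : ι × κ → R) :
    η ⬝ᵥ (X ⊗ₖ (Qᵀ * Q)) *ᵥ η
      = (((1 : Matrix ι ι R) ⊗ₖ Q) *ᵥ η) ⬝ᵥ
          (X ⊗ₖ (1 : Matrix μ μ R)) *ᵥ (((1 : Matrix ι ι R) ⊗ₖ Q) *ᵥ η) := by
  rw [kronecker_transpose_mul_self, ← mulVec_mulVec, ← mulVec_mulVec, dotProduct_mulVec,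
    vecMul_transpose]

theorem dotProduct_kronecker_one_mulVec [Fintype ι] [Fintype κ] [DecidableEq κ] [CommSemiring R]
    (S : Matrix ι ι R) (ζ : ι × κ → R) :
    ζ ⬝ᵥ (S ⊗ₖ (1 : Matrix κ κ R)) *ᵥ ζ
      = ∑ k, (fun i => ζ (i, k)) ⬝ᵥ S *ᵥ (fun i => ζ (i, k)) := by
  simp only [dotProduct, mulVec, Fintype.sum_prod_type, kronecker_apply, one_apply,
    mul_ite, mul_one, mul_zero, ite_mul, zero_mul, Finset.sum_ite_eq, Finset.mem_univ, if_true]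
  rw [Finset.sum_comm]

theorem dotProduct_diagonal_kronecker_one_mulVec [Fintype ι] [Fintype κ] [DecidableEq ι]
    [DecidableEq κ] [CommSemiring R] (φ : ι → R) (ζ : ι × κ → R) :
    ζ ⬝ᵥ (diagonal φ ⊗ₖ (1 : Matrix κ κ R)) *ᵥ ζ = ∑ p, φ p.1 * ζ p ^ 2 := by
  rw [← diagonal_one, diagonal_kronecker_diagonal]
  simp only [dotProduct, mulVec_diagonal, mul_one]
  exact Finset.sum_congr rfl fun p _ => by ring

section Ordered

variable [Fintype ι] [Fintype κ] [CommRing R] [LinearOrder R] [IsStrictOrderedRing R]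

theorem dotProduct_diagonal_kronecker_one_mulVec_le [DecidableEq ι] [DecidableEq κ]
    {φ : ι → R} {a : R} (hφ : ∀ i, φ i ≤ a) (ζ : ι × κ → R) :
    ζ ⬝ᵥ (diagonal φ ⊗ₖ (1 : Matrix κ κ R)) *ᵥ ζ ≤ a * ∑ p, ζ p ^ 2 := by
  rw [dotProduct_diagonal_kronecker_one_mulVec, Finset.mul_sum]
  exact Finset.sum_le_sum fun p _ => mul_le_mul_of_nonneg_right (hφ p.1) (sq_nonneg _)

theorem mul_sum_sq_le_dotProduct_kronecker_one_mulVec [DecidableEq κ]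
    {S : Matrix ι ι R} {lam : R}
    (hS : ∀ x : ι → R, lam * ∑ i, x i ^ 2 ≤ x ⬝ᵥ S *ᵥ x) (ζ : ι × κ → R) :
    lam * ∑ p, ζ p ^ 2 ≤ ζ ⬝ᵥ (S ⊗ₖ (1 : Matrix κ κ R)) *ᵥ ζ := by
  rw [dotProduct_kronecker_one_mulVec, Fintype.sum_prod_type, Finset.sum_comm, Finset.mul_sum]
  exact Finset.sum_le_sum fun k _ => hS _

theorem dotProduct_diagonal_kronecker_one_mulVec_le_mul [DecidableEq ι] [DecidableEq κ]
    {φ : ι → R} {S : Matrix ι ι R} {lam c : R} (hφ : ∀ i, 0 ≤ φ i) (hφc : ∀ i, φ i ≤ c * lam)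
    (hlam : 0 < lam) (hS : ∀ x : ι → R, lam * ∑ i, x i ^ 2 ≤ x ⬝ᵥ S *ᵥ x) (ζ : ι × κ → R) :
    ζ ⬝ᵥ (diagonal φ ⊗ₖ (1 : Matrix κ κ R)) *ᵥ ζ
      ≤ c * (ζ ⬝ᵥ (S ⊗ₖ (1 : Matrix κ κ R)) *ᵥ ζ) := by
  rcases isEmpty_or_nonempty ι with hι | ⟨⟨i⟩⟩
  · simp [dotProduct]
  have hc : 0 ≤ c := nonneg_of_mul_nonneg_left ((hφ i).trans (hφc i)) hlam
  calc ζ ⬝ᵥ (diagonal φ ⊗ₖ (1 : Matrix κ κ R)) *ᵥ ζ ≤ c * lam * ∑ p, ζ p ^ 2 :=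
        dotProduct_diagonal_kronecker_one_mulVec_le hφc ζ
    _ = c * (lam * ∑ p, ζ p ^ 2) := mul_assoc _ _ _
    _ ≤ c * (ζ ⬝ᵥ (S ⊗ₖ (1 : Matrix κ κ R)) *ᵥ ζ) :=
        mul_le_mul_of_nonneg_left (mul_sum_sq_le_dotProduct_kronecker_one_mulVec hS ζ) hc

theorem dotProduct_diagonal_kronecker_transpose_mul_self_mulVec_le_mul [Fintype μ]
    [DecidableEq ι] [DecidableEq μ] {φ : ι → R} {S : Matrix ι ι R} {lam c : R}
    (hφ : ∀ i, 0 ≤ φ i) (hφc : ∀ i, φ i ≤ c * lam) (hlam : 0 < lam)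
    (hS : ∀ x : ι → R, lam * ∑ i, x i ^ 2 ≤ x ⬝ᵥ S *ᵥ x)
    (Q : Matrix μ κ R) (η : ι × κ → R) :
    η ⬝ᵥ (diagonal φ ⊗ₖ (Qᵀ * Q)) *ᵥ η ≤ c * (η ⬝ᵥ (S ⊗ₖ (Qᵀ * Q)) *ᵥ η) := by
  rw [dotProduct_kronecker_transpose_mul_self_mulVec,
    dotProduct_kronecker_transpose_mul_self_mulVec]
  exact dotProduct_diagonal_kronecker_one_mulVec_le_mul hφ hφc hlam hS _

end Ordered

end Matrix

theorem lyapunov_V1_bound_general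
    {N n m : ℕ}
    (A : Matrix (Fin n) (Fin n) ℝ) (B : Matrix (Fin n) (Fin m) ℝ)
    (P : Matrix (Fin n) (Fin n) ℝ) (hP : P.IsSymm)
    (hare : Aᵀ * P + P * A + 1 - P * B * Bᵀ * P = 0)
    (φ : Fin N → ℝ) (hφ : ∀ i, 0 < φ i)
    (S : Matrix (Fin N) (Fin N) ℝ)
    (lam : ℝ) (hlam_pos : 0 < lam)
    (hlam : ∀ x : Fin N → ℝ, lam * (∑ i, x i ^ 2) ≤ x ⬝ᵥ S.mulVec x)
    (φmax : ℝ) (hφmax : ∀ i, φ i ≤ φmax)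
    (c : ℝ) (hc : c ≥ φmax / lam) :
    ∀ η : Fin N × Fin n → ℝ,
      η ⬝ᵥ ((Matrix.diagonal φ ⊗ₖ (P * A + Aᵀ * P))
          - c • (S ⊗ₖ (P * B * Bᵀ * P))).mulVec η
        ≤ - (η ⬝ᵥ ((Matrix.diagonal φ ⊗ₖ (1 : Matrix (Fin n) (Fin n) ℝ)).mulVec η)) := by
  intro η
  have hgram : P * B * Bᵀ * P = (Bᵀ * P)ᵀ * (Bᵀ * P) := by
    rw [transpose_mul, transpose_transpose, hP.eq, Matrix.mul_assoc (P * B)]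
  have hriccati : P * A + Aᵀ * P + 1 = P * B * Bᵀ * P := by
    rw [← sub_eq_zero, ← hare]; abel
  have hφc : ∀ i, φ i ≤ c * lam := fun i => (hφmax i).trans ((div_le_iff₀ hlam_pos).1 hc)
  have hsplit : η ⬝ᵥ (diagonal φ ⊗ₖ (P * A + Aᵀ * P)) *ᵥ η + η ⬝ᵥ (diagonal φ ⊗ₖ 1) *ᵥ η
      = η ⬝ᵥ (diagonal φ ⊗ₖ (P * B * Bᵀ * P)) *ᵥ η := by
    rw [← dotProduct_add, ← add_mulVec, ← kronecker_add, hriccati]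
  have hkey := dotProduct_diagonal_kronecker_transpose_mul_self_mulVec_le_mul
    (fun i => (hφ i).le) hφc hlam_pos hlam (Bᵀ * P) η
  rw [← hgram] at hkey
  rw [sub_mulVec, dotProduct_sub, smul_mulVec, dotProduct_smul, smul_eq_mul]
  linarith

/-- Estimate (51): if `P ≻ 0` solves the observer ARE `AᵀP + PA + I − PBBᵀP = 0`,
`Φ = diag(φ)` with `φᵢ > 0`, `S = ΦH + HᵀΦ ≻ 0` with minimum-eigenvalue lower
bound `lam`, and `c ≥ φmax / lam`, then for all `η`
`ηᵀ[Φ ⊗ (PA + AᵀP) − c·S ⊗ PBBᵀP]η ≤ −ηᵀ(Φ ⊗ Iₙ)η`. -/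
theorem lyapunov_V1_bound
    {N n m : ℕ}
    (A : Matrix (Fin n) (Fin n) ℝ) (B : Matrix (Fin n) (Fin m) ℝ)
    (P : Matrix (Fin n) (Fin n) ℝ) (hP : P.IsSymm) (hPpos : P.PosDef)
    (hare : Aᵀ * P + P * A + 1 - P * B * Bᵀ * P = 0)
    (φ : Fin N → ℝ) (hφ : ∀ i, 0 < φ i)
    (H : Matrix (Fin N) (Fin N) ℝ)
    (S : Matrix (Fin N) (Fin N) ℝ)
    (hS : S = Matrix.diagonal φ * H + Hᵀ * Matrix.diagonal φ) (hSpos : S.PosDef)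
    (lam : ℝ) (hlam_pos : 0 < lam)
    (hlam : ∀ x : Fin N → ℝ, lam * (∑ i, x i ^ 2) ≤ x ⬝ᵥ S.mulVec x)
    (φmax : ℝ) (hφmax : ∀ i, φ i ≤ φmax) (hφmax' : N ≠ 0 → ∃ i, φ i = φmax)
    (c : ℝ) (hc : c ≥ φmax / lam) :
    ∀ η : Fin N × Fin n → ℝ,
      η ⬝ᵥ ((Matrix.diagonal φ ⊗ₖ (P * A + Aᵀ * P))
          - c • (S ⊗ₖ (P * B * Bᵀ * P))).mulVec η
        ≤ - (η ⬝ᵥ ((Matrix.diagonal φ ⊗ₖ (1 : Matrix (Fin n) (Fin n) ℝ)).mulVec η)) :=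
  lyapunov_V1_bound_general A B P hP hare φ hφ S lam hlam_pos hlam φmax hφmax c hc
end

section
/- Let L̄ ∈ ℝ^{(N+1)×(N+1)} be as in the previous partition and K ∈ ℝ^{m×n}. If x_{ss} ∈ ℝ^{(N+1)n} satisfies c̄(L̄ ⊗ K)x_{ss} = ω̄ where ω̄ = (0, ω₁,…,ω_N) with ωⱼ = 0 for all j ≠ i, and the global neighborhood tracking error is e = −(L̄ ⊗ I_n)x_{ss} (restricted to followers), then c̄·K·eⱼ = −ωⱼ for every follower j; in particular K·eⱼ = 0 for all intact followers j ≠ i. -/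
/-!
The block row `j` of `(L̄ ⊗ K) x` is `K` applied to the block row `j` of `(L̄ ⊗ Iₙ) x`, because
`L̄ ⊗ K = (I ⊗ K)(L̄ ⊗ Iₙ)`. Hence `c̄ K eⱼ = −c̄ ((L̄ ⊗ K) x_ss)ⱼ = −ω̄ⱼ`, which vanishes for
every follower other than the attacked one, and `c̄ > 0` can be cancelled.
-/

open Matrix Kronecker

namespace Matrix

variable {ι m n R : Type*} [Fintype ι] [Fintype n] [DecidableEq ι] [CommSemiring R]

theorem one_kronecker_mulVec_apply (K : Matrix m n R) (y : ι × n → R) (a : ι) (l : m) :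
    ((1 ⊗ₖ K) *ᵥ y) (a, l) = (K *ᵥ fun k => y (a, k)) l := by
  simp [mulVec, dotProduct, Fintype.sum_prod_type, one_apply]

theorem kronecker_mulVec_eq_one_kronecker_mulVec [DecidableEq n] (A : Matrix ι ι R)
    (K : Matrix m n R) (x : ι × n → R) :
    (A ⊗ₖ K) *ᵥ x = (1 ⊗ₖ K) *ᵥ ((A ⊗ₖ (1 : Matrix n n R)) *ᵥ x) := by
  rw [mulVec_mulVec, ← mul_kronecker_mul, Matrix.one_mul, Matrix.mul_one]

theorem mulVec_kronecker_one_mulVec_row [DecidableEq n] (A : Matrix ι ι R) (K : Matrix m n R)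
    (x : ι × n → R) (a : ι) :
    (K *ᵥ fun k => ((A ⊗ₖ (1 : Matrix n n R)) *ᵥ x) (a, k)) =
      fun l => ((A ⊗ₖ K) *ᵥ x) (a, l) := by
  funext l
  rw [kronecker_mulVec_eq_one_kronecker_mulVec A K, one_kronecker_mulVec_apply]

end Matrix

theorem stealthy_attack_zero_tracking_error_general
    {N n m : ℕ}
    (Lbar : Matrix (Fin (N + 1)) (Fin (N + 1)) ℝ)
    (K : Matrix (Fin m) (Fin n) ℝ)
    (cbar : ℝ) (hc : 0 < cbar)
    (i : Fin N)
    (xss : Fin (N + 1) × Fin n → ℝ)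
    (ωbar : Fin (N + 1) × Fin m → ℝ)
    (hωj : ∀ j : Fin N, j ≠ i → ∀ l, ωbar (j.succ, l) = 0)
    (hss : cbar • (Lbar ⊗ₖ K).mulVec xss = ωbar)
    (e : Fin N → Fin n → ℝ)
    (he : ∀ j k, e j k =
      -((Lbar ⊗ₖ (1 : Matrix (Fin n) (Fin n) ℝ)).mulVec xss) (j.succ, k)) :
    (∀ j : Fin N, cbar • K.mulVec (e j) = fun l => -ωbar (j.succ, l)) ∧
      (∀ j : Fin N, j ≠ i → K.mulVec (e j) = 0) := by
  have weighted_error : ∀ j : Fin N, cbar • K.mulVec (e j) = fun l => -ωbar (j.succ, l) := by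
    intro j
    have he_j :
        e j = -fun k => ((Lbar ⊗ₖ (1 : Matrix (Fin n) (Fin n) ℝ)) *ᵥ xss) (j.succ, k) :=
      funext (he j)
    rw [he_j, mulVec_neg, mulVec_kronecker_one_mulVec_row, ← hss]
    funext l
    simp only [Pi.smul_apply, Pi.neg_apply, smul_neg]
  refine ⟨weighted_error, fun j hj => ?_⟩
  have hzero : cbar • K.mulVec (e j) = 0 := by
    rw [weighted_error j]
    funext l
    simp only [hωj j hj l, neg_zero, Pi.zero_apply]
  exact (smul_eq_zero.mp hzero).resolve_left hc.ne'

/-- Identity (47)–(48) of Theorem 2: if `x_ss` satisfies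
`c̄(L̄ ⊗ K) x_ss = ω̄` where only agent `i` is attacked (`ωⱼ = 0` for `j ≠ i`),
and `e` is the (follower part of the) global neighborhood tracking error
`e = −(L̄ ⊗ Iₙ) x_ss`, then `c̄·K·eⱼ = −ωⱼ` for every follower `j`; in
particular `K·eⱼ = 0` for all intact followers `j ≠ i`. -/
theorem stealthy_attack_zero_tracking_error
    {N n m : ℕ}
    (Lbar : Matrix (Fin (N + 1)) (Fin (N + 1)) ℝ)
    (hleader : ∀ j, Lbar 0 j = 0)
    (K : Matrix (Fin m) (Fin n) ℝ)
    (cbar : ℝ) (hc : 0 < cbar)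
    (i : Fin N)
    (xss : Fin (N + 1) × Fin n → ℝ)
    (ωbar : Fin (N + 1) × Fin m → ℝ)
    (hω0 : ∀ l, ωbar (0, l) = 0)
    (hωj : ∀ j : Fin N, j ≠ i → ∀ l, ωbar (j.succ, l) = 0)
    (hss : cbar • (Lbar ⊗ₖ K).mulVec xss = ωbar)
    (e : Fin N → Fin n → ℝ)
    (he : ∀ j k, e j k =
      -((Lbar ⊗ₖ (1 : Matrix (Fin n) (Fin n) ℝ)).mulVec xss) (j.succ, k)) :
    (∀ j : Fin N, cbar • K.mulVec (e j) = fun l => -ωbar (j.succ, l)) ∧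
      (∀ j : Fin N, j ≠ i → K.mulVec (e j) = 0) :=
  stealthy_attack_zero_tracking_error_general Lbar K cbar hc i xss ωbar hωj hss e he
end
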